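/- arXiv:2402.07227 — 2 statements merged into one kernel-verified Lean document; each statement's English description precedes it below -/
import Mathlib

section
/- Let a > 0 and 0 ≤ τ < π/(2a). Then every complex root λ of λ + a·e^{-λτ} = 0 has negative real part. -/
theorem stmt_8 (a τ : ℝ) (ha : 0 < a) (hτ0 : 0 ≤ τ) (hτ : τ < Real.pi / (2 * a)) :
    ∀ l : ℂ, l + (a : ℂ) * Complex.exp (-l * (τ : ℂ)) = 0 → l.re < 0 := by
  intro l hl
  by_contra hx
  push_neg at hx
  set x := l.re with hxdef
  set y := l.im with hydef
  have hzre : (-l * (τ : ℂ)).re = -x * τ := by simp [hxdef]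
  have hzim : (-l * (τ : ℂ)).im = -y * τ := by simp [hydef]
  have hre : x + a * (Real.exp (-x * τ) * Real.cos (-y * τ)) = 0 := by
    have := congrArg Complex.re hl
    simpa [Complex.exp_re, hzre, hzim] using this
  have him : y + a * (Real.exp (-x * τ) * Real.sin (-y * τ)) = 0 := by
    have := congrArg Complex.im hl
    simpa [Complex.exp_im, hzre, hzim] using this
  have hE1 : Real.exp (-x * τ) ≤ 1 := by
    apply Real.exp_le_one_iff.2
    nlinarith
  have hE0 : 0 < Real.exp (-x * τ) := Real.exp_pos _
  -- |y| ≤ a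
  have hy : |y| ≤ a := by
    have : y = -(a * (Real.exp (-x * τ) * Real.sin (-y * τ))) := by linarith
    rw [this, abs_neg, abs_mul, abs_mul]
    have hs : |Real.sin (-y * τ)| ≤ 1 := Real.abs_sin_le_one _
    have hEa : |Real.exp (-x * τ)| ≤ 1 := by rwa [abs_of_pos hE0]
    calc |a| * (|Real.exp (-x * τ)| * |Real.sin (-y * τ)|) ≤ |a| * 1 := by
          apply mul_le_mul_of_nonneg_left _ (abs_nonneg a)
          exact mul_le_one₀ hEa (abs_nonneg _) hs
      _ = a := by rw [abs_of_pos ha]; ring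
  have hπ : |y * τ| < Real.pi / 2 := by
    rw [abs_mul, abs_of_nonneg hτ0]
    have h2a : (0:ℝ) < 2 * a := by linarith
    have haτ : a * τ < Real.pi / 2 := by
      have := (lt_div_iff₀ h2a).1 hτ
      linarith
    calc |y| * τ ≤ a * τ := mul_le_mul_of_nonneg_right hy hτ0
      _ < Real.pi / 2 := haτ
  have hcos : 0 < Real.cos (-y * τ) := by
    apply Real.cos_pos_of_mem_Ioo
    constructor
    · have := abs_lt.1 hπ
      simp only [neg_mul]
      linarith [this.2]
    · have := abs_lt.1 hπ
      simp only [neg_mul]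
      linarith [this.1]
  nlinarith [mul_pos (mul_pos ha hE0) hcos]
end

section
/- If C_II > 0 and τ ≥ 0, then the characteristic equation λ = C_II·e^{-λτ} has a positive real root; consequently the equilibria γ₁, γ₂, γ₃, γ₅ of the delayed replicator system (all of which have this equation as a factor of their characteristic equation) are unstable. -/
theorem stmt_13 (C_II τ : ℝ) (h : 0 < C_II) (hτ : 0 ≤ τ) :
    ∃ l : ℝ, 0 < l ∧ l = C_II * Real.exp (-l * τ) := by
  set f : ℝ → ℝ := fun l => l - C_II * Real.exp (-l * τ) with hf
  have hcont : ContinuousOn f (Set.Icc 0 C_II) := by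
    apply Continuous.continuousOn
    continuity
  have h0 : f 0 = -C_II := by simp [hf]
  have h1 : f C_II ≥ 0 := by
    have : Real.exp (-C_II * τ) ≤ 1 := by
      apply Real.exp_le_one_iff.mpr
      nlinarith
    simp only [hf]
    nlinarith [Real.exp_pos (-C_II * τ)]
  have hsub : Set.Icc (f 0) (f C_II) ⊆ f '' Set.Icc 0 C_II :=
    intermediate_value_Icc h.le hcont
  have hmem : (0 : ℝ) ∈ Set.Icc (f 0) (f C_II) := by
    rw [h0]; exact ⟨by linarith, h1⟩
  obtain ⟨l, hl, hfl⟩ := hsub hmem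
  refine ⟨l, ?_, ?_⟩
  · rcases lt_or_eq_of_le hl.1 with h' | h'
    · exact h'
    · exfalso
      have : f l = -C_II := by rw [← h', h0]
      rw [hfl] at this; linarith
  · have : l - C_II * Real.exp (-l * τ) = 0 := hfl
    linarith
end
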